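/- arXiv:2412.09552 — 3 statements merged into one kernel-verified Lean document; each statement's English description precedes it below -/
import Mathlib

section
/- Let π : H → B be a partial representation of a Hopf algebra H in a unital algebra B. Then the map π̄ : H^opcop → B^op defined by π̄(h) = π(h) is a partial representation of the Hopf algebra H^opcop in the opposite algebra B^op. -/
open TensorProduct

/-- Sweedler-style sum `h ↦ Σ f(h₍₁₎) * g(h₍₂₎)` for linear maps `f g : H →ₗ[k] B`,
with respect to a bilinear multiplication `mul` on `B`. -/
noncomputable def sweedler {k H B : Type*} [CommRing k] [Ring H] [HopfAlgebra k H]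
    [AddCommGroup B] [Module k B]
    (mul : B →ₗ[k] B →ₗ[k] B) (f g : H →ₗ[k] B) : H →ₗ[k] B :=
  TensorProduct.lift ((mul ∘ₗ f).compl₂ g) ∘ₗ Coalgebra.comul

/-- A partial representation of a Hopf algebra `H` in a unital algebra `B`:
(PR1) `π(1) = 1`; (PR2) `π(h)π(k₍₁₎)π(S(k₍₂₎)) = π(hk₍₁₎)π(S(k₍₂₎))`;
(PR3) `π(h₍₁₎)π(S(h₍₂₎))π(g) = π(h₍₁₎)π(S(h₍₂₎)g)`. -/
structure IsPartialRep (k : Type*) {H B : Type*} [CommRing k] [Ring H] [HopfAlgebra k H]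
    [Ring B] [Algebra k B] (π : H →ₗ[k] B) : Prop where
  pr1 : π 1 = 1
  pr2 : ∀ h kk : H,
    sweedler (LinearMap.mul k B) ((LinearMap.mulLeft k (π h)) ∘ₗ π)
      (π ∘ₗ (HopfAlgebra.antipode k : H →ₗ[k] H)) kk =
    sweedler (LinearMap.mul k B) (π ∘ₗ LinearMap.mulLeft k h)
      (π ∘ₗ (HopfAlgebra.antipode k : H →ₗ[k] H)) kk
  pr3 : ∀ h g : H,
    sweedler (LinearMap.mul k B) π (π ∘ₗ (HopfAlgebra.antipode k : H →ₗ[k] H)) h * π g =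
    sweedler (LinearMap.mul k B) π
      (π ∘ₗ LinearMap.mulRight k g ∘ₗ (HopfAlgebra.antipode k : H →ₗ[k] H)) h

/-- Coopposite Sweedler sum `h ↦ Σ f(h₍₂₎) * g(h₍₁₎)` (i.e. the Sweedler sum with respect
to the coopposite comultiplication `Δᶜᵒᵖ = τ ∘ Δ`). -/
noncomputable def sweedlerCoop {k H B : Type*} [CommRing k] [Ring H] [HopfAlgebra k H]
    [AddCommGroup B] [Module k B]
    (mul : B →ₗ[k] B →ₗ[k] B) (f g : H →ₗ[k] B) : H →ₗ[k] B :=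
  TensorProduct.lift ((mul ∘ₗ f).compl₂ g) ∘ₗ
    (TensorProduct.comm k H H).toLinearMap ∘ₗ Coalgebra.comul

/-!
Under the opposite product of `B` and the coopposite coproduct of `H`, (PR2) and (PR3) for `π̄`
become (PR5) and (PR4) for `π`. Both are identities in the convolution algebra `Hom(H, B)`:
with `P = π` and `Q = π ∘ S`, coassociativity lets the outer argument of (PR2) and (PR3) depend
on a Sweedler leg, which together with `S * id = ε` gives `P * Q * P = P` and
`P * Q * (π ∘ (· * g)) = P · π g`. Inserting these and reassociating yields (PR4) and (PR5).
-/

open Coalgebra WithConv LinearMap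

section ConvolutionStruct

variable {R C A : Type*} [CommSemiring R] [AddCommMonoid C] [Module R C] [CoalgebraStruct R C]
  [Semiring A] [Algebra R A]

lemma LinearMap.convMul_apply_eq_sum (f g : WithConv (C →ₗ[R] A)) (c : C) :
    (f * g) c = ∑ i ∈ (ℛ R c).index, f ((ℛ R c).left i) * g ((ℛ R c).right i) :=
  (ℛ R c).convMul_apply f g

lemma LinearMap.mulLeft_comp_convMul (a : A) (f g : C →ₗ[R] A) :
    toConv (mulLeft R a ∘ₗ f) * toConv g =
      toConv (mulLeft R a ∘ₗ (toConv f * toConv g).ofConv) := by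
  ext c
  simp [(ℛ R c).convMul_apply, mul_assoc]

lemma LinearMap.convMul_mulRight_comp (a : A) (f g : C →ₗ[R] A) :
    toConv f * toConv (mulRight R a ∘ₗ g) =
      toConv (mulRight R a ∘ₗ (toConv f * toConv g).ofConv) := by
  ext c
  simp [(ℛ R c).convMul_apply, mul_assoc]

end ConvolutionStruct

section Convolution

variable {R C A B : Type*} [CommSemiring R] [AddCommMonoid C] [Module R C] [Coalgebra R C]
  [Semiring A] [Algebra R A] [Semiring B] [Algebra R B]

lemma Coalgebra.sum_apply_tmul_tmul_eq {M : Type*} [AddCommMonoid M] [Module R M]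
    (Φ : C ⊗[R] (C ⊗[R] C) →ₗ[R] M) (c : C) :
    ∑ i ∈ (ℛ R c).index, ∑ j ∈ (ℛ R ((ℛ R c).left i)).index,
      Φ ((ℛ R ((ℛ R c).left i)).left j ⊗ₜ
        ((ℛ R ((ℛ R c).left i)).right j ⊗ₜ (ℛ R c).right i)) =
    ∑ i ∈ (ℛ R c).index, ∑ j ∈ (ℛ R ((ℛ R c).right i)).index,
      Φ ((ℛ R c).left i ⊗ₜ
        ((ℛ R ((ℛ R c).right i)).left j ⊗ₜ (ℛ R ((ℛ R c).right i)).right j)) := by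
  simpa only [map_sum] using
    congr(Φ $(sum_tmul_tmul_eq (ℛ R c) (fun i ↦ ℛ R ((ℛ R c).left i))
      (fun i ↦ ℛ R ((ℛ R c).right i))))

lemma LinearMap.comp_mulLeft_comp_one (π : A →ₗ[R] B) (a : A) :
    π ∘ₗ mulLeft R a ∘ₗ (1 : WithConv (C →ₗ[R] A)).ofConv =
      mulLeft R (π a) ∘ₗ (1 : WithConv (C →ₗ[R] B)).ofConv := by
  ext c
  simp [Algebra.algebraMap_eq_smul_one]

lemma LinearMap.comp_mulRight_comp_one (π : A →ₗ[R] B) (a : A) :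
    π ∘ₗ mulRight R a ∘ₗ (1 : WithConv (C →ₗ[R] A)).ofConv =
      mulRight R (π a) ∘ₗ (1 : WithConv (C →ₗ[R] B)).ofConv := by
  ext c
  simp [Algebra.algebraMap_eq_smul_one]

lemma LinearMap.toConv_comp_one {π : A →ₗ[R] B} (h1 : π 1 = 1) :
    toConv (π ∘ₗ (1 : WithConv (C →ₗ[R] A)).ofConv) = 1 := by
  ext c
  simp [Algebra.algebraMap_eq_smul_one, h1]

end Convolution

lemma LinearMap.mulLeft_op_comp_op {R M A : Type*} [CommSemiring R] [AddCommMonoid M]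
    [Module R M] [Semiring A] [Algebra R A] (b : A) (f : M →ₗ[R] A) :
    mulLeft R (MulOpposite.op b) ∘ₗ (MulOpposite.opLinearEquiv R).toLinearMap ∘ₗ f =
      (MulOpposite.opLinearEquiv R).toLinearMap ∘ₗ mulRight R b ∘ₗ f := by
  ext
  simp

section PartialRep

variable {k H B : Type*} [CommRing k] [Ring H] [HopfAlgebra k H] [Ring B] [Algebra k B]

local notation "S" => (HopfAlgebra.antipode k : H →ₗ[k] H)

lemma sweedler_mul_eq_convMul (f g : H →ₗ[k] B) :
    sweedler (LinearMap.mul k B) f g = (toConv f * toConv g).ofConv := by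
  change _ = mul' k B ∘ₗ TensorProduct.map f g ∘ₗ comul
  rw [sweedler, ← LinearMap.comp_assoc]
  congr 1
  ext x y
  simp

lemma sweedlerCoop_mul_op (f g : H →ₗ[k] B) :
    sweedlerCoop (LinearMap.mul k Bᵐᵒᵖ) ((MulOpposite.opLinearEquiv k).toLinearMap ∘ₗ f)
      ((MulOpposite.opLinearEquiv k).toLinearMap ∘ₗ g) =
    (MulOpposite.opLinearEquiv k).toLinearMap ∘ₗ (toConv g * toConv f).ofConv := by
  change _ = _ ∘ₗ mul' k B ∘ₗ TensorProduct.map g f ∘ₗ comul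
  simp only [sweedlerCoop, ← LinearMap.comp_assoc]
  congr 1
  ext x y
  simp

namespace IsPartialRep

variable {π : H →ₗ[k] B}

lemma map_mul_convMul_apply (hπ : IsPartialRep k π) (x y : H) :
    π x * (toConv π * toConv (π ∘ₗ S)) y =
      (toConv (π ∘ₗ mulLeft k x) * toConv (π ∘ₗ S)) y := by
  have := hπ.pr2 x y
  rwa [sweedler_mul_eq_convMul, sweedler_mul_eq_convMul, mulLeft_comp_convMul] at this

lemma convMul_apply_mul_map (hπ : IsPartialRep k π) (y g : H) :
    (toConv π * toConv (π ∘ₗ S)) y * π g =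
      (toConv π * toConv (π ∘ₗ mulRight k g ∘ₗ S)) y := by
  have := hπ.pr3 y g
  rwa [sweedler_mul_eq_convMul, sweedler_mul_eq_convMul] at this

/-- (PR2) with `h` replaced by `F k₍₁₎`, i.e.
`Σ π(F k₍₁₎) π(k₍₂₎) π(S k₍₃₎) = Σ π(F(k₍₁₎) k₍₂₎) π(S k₍₃₎)`. -/
lemma comp_convMul_convMul (hπ : IsPartialRep k π) (F : H →ₗ[k] H) :
    toConv (π ∘ₗ F) * (toConv π * toConv (π ∘ₗ S)) =
      toConv (π ∘ₗ (toConv F * toConv LinearMap.id).ofConv) * toConv (π ∘ₗ S) := by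
  ext c
  rw [convMul_apply_eq_sum, convMul_apply_eq_sum]
  calc _ = ∑ i ∈ (ℛ k c).index,
        (toConv (π ∘ₗ mulLeft k (F ((ℛ k c).left i))) * toConv (π ∘ₗ S)) ((ℛ k c).right i) :=
      Finset.sum_congr rfl fun i _ ↦ hπ.map_mul_convMul_apply _ _
    _ = _ := by
      have := Coalgebra.sum_apply_tmul_tmul_eq
        (mul' k B ∘ₗ TensorProduct.map (π ∘ₗ mul' k H ∘ₗ TensorProduct.map F LinearMap.id)
          (π ∘ₗ S) ∘ₗ (TensorProduct.assoc k H H H).symm.toLinearMap) c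
      simp only [LinearMap.comp_apply, convMul_apply_eq_sum, map_sum, Finset.sum_mul] at this ⊢
      simpa using this.symm

/-- (PR3) with `g` replaced by `G k₍₃₎`, i.e.
`Σ π(k₍₁₎) π(S k₍₂₎) π(G k₍₃₎) = Σ π(k₍₁₎) π(S(k₍₂₎) G(k₍₃₎))`. -/
lemma convMul_convMul_comp (hπ : IsPartialRep k π) (G : H →ₗ[k] H) :
    toConv π * toConv (π ∘ₗ S) * toConv (π ∘ₗ G) =
      toConv π * toConv (π ∘ₗ (toConv S * toConv G).ofConv) := by
  ext c
  rw [convMul_apply_eq_sum, convMul_apply_eq_sum]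
  calc _ = ∑ i ∈ (ℛ k c).index,
        (toConv π * toConv (π ∘ₗ mulRight k (G ((ℛ k c).right i)) ∘ₗ S)) ((ℛ k c).left i) :=
      Finset.sum_congr rfl fun i _ ↦ hπ.convMul_apply_mul_map _ _
    _ = _ := by
      have := Coalgebra.sum_apply_tmul_tmul_eq
        (mul' k B ∘ₗ TensorProduct.map π (π ∘ₗ mul' k H ∘ₗ TensorProduct.map S G)) c
      simp only [LinearMap.comp_apply, convMul_apply_eq_sum, map_sum, Finset.mul_sum] at this ⊢
      simpa using this

lemma convMul_convMul_mulRight (hπ : IsPartialRep k π) (g : H) :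
    toConv π * toConv (π ∘ₗ S) * toConv (π ∘ₗ mulRight k g) =
      toConv (mulRight k (π g) ∘ₗ π) := by
  have hS : toConv S * toConv (mulRight k g) =
      toConv (mulRight k g ∘ₗ (1 : WithConv (H →ₗ[k] H)).ofConv) := by
    have := convMul_mulRight_comp g S LinearMap.id
    rwa [comp_id, antipode_mul_id] at this
  rw [hπ.convMul_convMul_comp, hS, comp_mulRight_comp_one, convMul_mulRight_comp,
    toConv_ofConv, mul_one]

lemma convMul_convMul_self (hπ : IsPartialRep k π) :
    toConv π * toConv (π ∘ₗ S) * toConv π = toConv π := by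
  simpa only [mulRight_one, comp_id, hπ.pr1, id_comp] using hπ.convMul_convMul_mulRight 1

theorem pr4 (hπ : IsPartialRep k π) (h : H) :
    toConv (π ∘ₗ mulLeft k h ∘ₗ S) * toConv π =
      toConv (mulLeft k (π h) ∘ₗ (toConv (π ∘ₗ S) * toConv π).ofConv) := by
  have hS : toConv (mulLeft k h ∘ₗ S) * toConv LinearMap.id =
      toConv (mulLeft k h ∘ₗ (1 : WithConv (H →ₗ[k] H)).ofConv) := by
    rw [mulLeft_comp_convMul, antipode_mul_id]
  calc toConv (π ∘ₗ mulLeft k h ∘ₗ S) * toConv π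
      = toConv (π ∘ₗ mulLeft k h ∘ₗ S) * (toConv π * toConv (π ∘ₗ S)) * toConv π := by
        rw [mul_assoc (toConv (π ∘ₗ mulLeft k h ∘ₗ S)), hπ.convMul_convMul_self]
    _ = toConv (mulLeft k (π h) ∘ₗ (1 : WithConv (H →ₗ[k] B)).ofConv) * toConv (π ∘ₗ S) *
          toConv π := by
        rw [hπ.comp_convMul_convMul, hS, comp_mulLeft_comp_one]
    _ = _ := by
      rw [mulLeft_comp_convMul, toConv_ofConv, one_mul, mulLeft_comp_convMul]

theorem pr5 (hπ : IsPartialRep k π) (g : H) :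
    toConv (mulRight k (π g) ∘ₗ (toConv (π ∘ₗ S) * toConv π).ofConv) =
      toConv (π ∘ₗ S) * toConv (π ∘ₗ mulRight k g) := by
  calc _ = toConv (π ∘ₗ S) * (toConv π * toConv (π ∘ₗ S)) * toConv (π ∘ₗ mulRight k g) := by
        rw [← convMul_mulRight_comp, ← hπ.convMul_convMul_mulRight]
        exact (mul_assoc _ _ _).symm
    _ = _ := by
      rw [hπ.comp_convMul_convMul, antipode_mul_id, toConv_comp_one hπ.pr1, one_mul]

end IsPartialRep

end PartialRep


/-- The axioms for `π̄` are written with the product of `Bᵐᵒᵖ`, the product `h ·op g = g * h`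
of `H^opcop` (so `mulLeft` and `mulRight` trade places) and the coopposite coproduct. -/
theorem partialRep_opcop
    {k H B : Type*} [CommRing k] [Ring H] [HopfAlgebra k H] [Ring B] [Algebra k B]
    (π : H →ₗ[k] B) (hπ : IsPartialRep k π) :
    ∀ π' : H →ₗ[k] Bᵐᵒᵖ,
      π' = (MulOpposite.opLinearEquiv k).toLinearMap ∘ₗ π →
      (π' 1 = 1) ∧
      (∀ h kk : H,
        sweedlerCoop (LinearMap.mul k Bᵐᵒᵖ) ((LinearMap.mulLeft k (π' h)) ∘ₗ π')
          (π' ∘ₗ (HopfAlgebra.antipode k : H →ₗ[k] H)) kk =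
        sweedlerCoop (LinearMap.mul k Bᵐᵒᵖ) (π' ∘ₗ LinearMap.mulRight k h)
          (π' ∘ₗ (HopfAlgebra.antipode k : H →ₗ[k] H)) kk) ∧
      (∀ h g : H,
        sweedlerCoop (LinearMap.mul k Bᵐᵒᵖ) π'
            (π' ∘ₗ (HopfAlgebra.antipode k : H →ₗ[k] H)) h * π' g =
        sweedlerCoop (LinearMap.mul k Bᵐᵒᵖ) π'
            (π' ∘ₗ LinearMap.mulLeft k g ∘ₗ (HopfAlgebra.antipode k : H →ₗ[k] H)) h) := by
  rintro π' rfl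
  refine ⟨by simp [hπ.pr1], fun h kk ↦ ?_, fun h g ↦ ?_⟩
  · rw [comp_apply, LinearEquiv.coe_coe, MulOpposite.coe_opLinearEquiv, mulLeft_op_comp_op,
      comp_assoc, comp_assoc, sweedlerCoop_mul_op, sweedlerCoop_mul_op, convMul_mulRight_comp,
      hπ.pr5]
  · rw [comp_assoc, comp_assoc, sweedlerCoop_mul_op, sweedlerCoop_mul_op, hπ.pr4]
    simp
end

section
/- Let ▷ : H ⊗ R → R be a symmetric left partial action of a Hopf algebra H on a generalized matrix algebra R = (iMj) such that each embedded subbimodule ι_ij(iMj) ⊆ R is H-invariant. Then for each i, the restriction ⇀_i : H ⊗ R_i → R_i, h ⇀_i r = ι_ii⁻¹(h ▷ ι_ii(r)), is a symmetric left partial action of H on the diagonal algebra R_i. -/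
open TensorProduct

section GMD

variable {k : Type*} [Field k] {n : ℕ}
variable (M : Fin n → Fin n → Type*) [∀ i j, AddCommGroup (M i j)] [∀ i j, Module k (M i j)]
variable (θ : ∀ i j l : Fin n, M i j →ₗ[k] M j l →ₗ[k] M i l)
variable (e : ∀ i, M i i)

/-- A generalized matrix datum: the bilinear products `θ i j l` are associative and
the elements `e i = η_i(1)` are units. -/
structure IsGMDatum : Prop where
  assoc : ∀ (i j l m : Fin n) (x : M i j) (y : M j l) (z : M l m),
    θ i l m (θ i j l x y) z = θ i j m x (θ j l m y z)
  one_mul : ∀ (i j : Fin n) (x : M i j), θ i i j (e i) x = x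
  mul_one : ∀ (i j : Fin n) (x : M i j), θ i j j x (e j) = x

/-- The underlying space of the generalized matrix algebra `R = ⊕_{i,j} M i j`. -/
abbrev gmaSpace := ∀ p : Fin n × Fin n, M p.1 p.2

/-- Row-column multiplication on the generalized matrix algebra. -/
def gmaMul (x y : gmaSpace M) : gmaSpace M :=
  fun p => ∑ l, θ p.1 l p.2 (x (p.1, l)) (y (l, p.2))

/-- The unit `Σ_i ι_ii (e i)` of the generalized matrix algebra. -/
noncomputable def gmaOne : gmaSpace M :=
  ∑ i, Pi.single (M := fun p : Fin n × Fin n => M p.1 p.2) (i, i) (e i)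

end GMD
/-- A symmetric left partial action of a Hopf algebra `H` on a (not necessarily
unital-typeclass) algebra `(A, mulA, oneA)`: (LPA1) `1_H·a = a`;
(LPA2) `h·(ab) = (h₍₁₎·a)(h₍₂₎·b)`;
(LPA3) `h·(g·a) = (h₍₁₎·1)(h₍₂₎g·a) = (h₍₁₎g·a)(h₍₂₎·1)`. -/
structure IsLeftPartialActionOn (k : Type*) {H A : Type*} [CommRing k] [Ring H]
    [HopfAlgebra k H] [AddCommGroup A] [Module k A]
    (mulA : A →ₗ[k] A →ₗ[k] A) (oneA : A) (act : H →ₗ[k] A →ₗ[k] A) : Prop where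
  lpa1 : ∀ a : A, act 1 a = a
  lpa2 : ∀ (h : H) (a b : A),
    act h (mulA a b) = sweedler mulA (act.flip a) (act.flip b) h
  lpa3 : ∀ (h g : H) (a : A),
    act h (act g a) =
      sweedler mulA (act.flip oneA) ((act.flip a) ∘ₗ LinearMap.mulRight k g) h
  lpa3' : ∀ (h g : H) (a : A),
    act h (act g a) =
      sweedler mulA ((act.flip a) ∘ₗ LinearMap.mulRight k g) (act.flip oneA) h

section GMA

variable {k : Type*} [Field k] {n : ℕ}
variable (M : Fin n → Fin n → Type*) [∀ i j, AddCommGroup (M i j)] [∀ i j, Module k (M i j)]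
variable (θ : ∀ i j l : Fin n, M i j →ₗ[k] M j l →ₗ[k] M i l)

/-- The multiplication of the generalized matrix algebra, as a bilinear map. -/
noncomputable def gmaMulL : gmaSpace M →ₗ[k] gmaSpace M →ₗ[k] gmaSpace M :=
  LinearMap.mk₂ k (gmaMul M θ)
    (fun x x' y => by
      funext p; simp [gmaMul, map_add, LinearMap.add_apply, Finset.sum_add_distrib])
    (fun c x y => by
      funext p; simp [gmaMul, Finset.smul_sum])
    (fun x y y' => by
      funext p; simp [gmaMul, map_add, LinearMap.add_apply, Finset.sum_add_distrib])
    (fun c x y => by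
      funext p; simp [gmaMul, Finset.smul_sum])

/-- The canonical inclusion `ι_ij : M i j → R` of a component into the generalized
matrix algebra. -/
noncomputable def gmaIncl (i j : Fin n) : M i j →ₗ[k] gmaSpace M :=
  LinearMap.single k (fun p : Fin n × Fin n => M p.1 p.2) (i, j)

variable {H : Type*} [Ring H] [HopfAlgebra k H]

/-- The restriction `π_ij(h)(m) = ι_ij⁻¹(h ▷ ι_ij(m))` of a partial action on the
generalized matrix algebra to the component `M i j`. -/
noncomputable def actRestrict (act : H →ₗ[k] gmaSpace M →ₗ[k] gmaSpace M)
    (i j : Fin n) : H →ₗ[k] M i j →ₗ[k] M i j where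
  toFun h := (LinearMap.proj (i, j)) ∘ₗ (act h) ∘ₗ (gmaIncl M i j)
  map_add' h h' := by ext m; simp
  map_smul' c h := by ext m; simp

end GMA

/-! Projecting to the `(i, i)` entry turns every Sweedler sum over `R` in (LPA2), (LPA3) into the
corresponding sum over `R_i`: by invariance one factor of each product lies in `ι_ii(R_i)`, and
`(x · ι_ii b)_ii = x_ii b`, `(ι_ii b · x)_ii = b x_ii`. For the unit, invariance of the other
diagonal blocks gives `(h ▷ 1_R)_ii = h ⇀_i e_i`. -/

theorem comp_sweedler {k H B B' : Type*} [CommRing k] [Ring H] [HopfAlgebra k H]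
    [AddCommGroup B] [Module k B] [AddCommGroup B'] [Module k B']
    {mul : B →ₗ[k] B →ₗ[k] B} {mul' : B' →ₗ[k] B' →ₗ[k] B'}
    {f g : H →ₗ[k] B} {f' g' : H →ₗ[k] B'} (P : B →ₗ[k] B')
    (hP : ∀ x y, P (mul (f x) (g y)) = mul' (f' x) (g' y)) :
    P ∘ₗ sweedler mul f g = sweedler mul' f' g' := by
  rw [sweedler, sweedler, ← LinearMap.comp_assoc, ← TensorProduct.lift_compr₂]
  congr 2
  ext x y
  exact hP x y

section GMARestriction

variable {k : Type*} [Field k] {n : ℕ}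
variable (M : Fin n → Fin n → Type*) [∀ i j, AddCommGroup (M i j)] [∀ i j, Module k (M i j)]
variable (θ : ∀ i j l : Fin n, M i j →ₗ[k] M j l →ₗ[k] M i l)

@[simp]
theorem gmaMulL_apply (x y : gmaSpace M) : gmaMulL (k := k) M θ x y = gmaMul M θ x y := rfl

@[simp]
theorem gmaIncl_apply_same (i j : Fin n) (m : M i j) : gmaIncl (k := k) M i j m (i, j) = m :=
  Pi.single_eq_same _ _

theorem gmaIncl_apply_of_ne {i j : Fin n} (m : M i j) {p : Fin n × Fin n} (hp : p ≠ (i, j)) :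
    gmaIncl (k := k) M i j m p = 0 :=
  Pi.single_eq_of_ne (M := fun p : Fin n × Fin n => M p.1 p.2) hp m

theorem gmaMul_gmaIncl_right_apply (i : Fin n) {j l : Fin n} (x : gmaSpace M) (b : M j l) :
    gmaMul M θ x (gmaIncl (k := k) M j l b) (i, l) = θ i j l (x (i, j)) b := by
  refine (Finset.sum_eq_single j (fun m _ hm => ?_) (by simp)).trans (by simp)
  rw [gmaIncl_apply_of_ne M b (by simp [hm]), map_zero]

theorem gmaMul_gmaIncl_left_apply {i j : Fin n} (l : Fin n) (a : M i j) (x : gmaSpace M) :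
    gmaMul M θ (gmaIncl (k := k) M i j a) x (i, l) = θ i j l a (x (j, l)) := by
  refine (Finset.sum_eq_single j (fun m _ hm => ?_) (by simp)).trans (by simp)
  rw [gmaIncl_apply_of_ne M a (by simp [hm]), map_zero, LinearMap.zero_apply]

theorem gmaMulL_gmaIncl_gmaIncl {i j l : Fin n} (a : M i j) (b : M j l) :
    gmaMulL (k := k) M θ (gmaIncl (k := k) M i j a) (gmaIncl (k := k) M j l b) =
      gmaIncl (k := k) M i l (θ i j l a b) := by
  funext p
  rw [gmaMulL_apply]
  by_cases hp : p = (i, l)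
  · subst hp
    rw [gmaMul_gmaIncl_right_apply, gmaIncl_apply_same, gmaIncl_apply_same]
  · rw [gmaIncl_apply_of_ne M _ hp]
    refine Finset.sum_eq_zero fun m _ => ?_
    by_cases hm : (p.1, m) = (i, j)
    · obtain ⟨rfl, rfl⟩ := Prod.mk.inj hm
      have hl : p.2 ≠ l := fun h => hp (Prod.ext rfl h)
      rw [gmaIncl_apply_of_ne M b (by simp [hl]), map_zero]
    · rw [gmaIncl_apply_of_ne M a hm, map_zero, LinearMap.zero_apply]

variable {H : Type*} [Ring H] [HopfAlgebra k H] {M}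
variable {act : H →ₗ[k] gmaSpace M →ₗ[k] gmaSpace M}

theorem actRestrict_apply (i j : Fin n) (h : H) (m : M i j) :
    actRestrict M act i j h m = act h (gmaIncl (k := k) M i j m) (i, j) := rfl

theorem act_gmaIncl_eq_gmaIncl_actRestrict {i j : Fin n}
    (hinv : ∀ (h : H) (m : M i j),
      act h (gmaIncl (k := k) M i j m) ∈ LinearMap.range (gmaIncl (k := k) M i j))
    (h : H) (m : M i j) :
    act h (gmaIncl (k := k) M i j m) = gmaIncl (k := k) M i j (actRestrict M act i j h m) := by
  obtain ⟨m', hm'⟩ := hinv h m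
  rw [actRestrict_apply, ← hm', gmaIncl_apply_same]

theorem act_gmaOne_apply_diag (e : ∀ i, M i i)
    (hinv : ∀ (j : Fin n) (h : H) (m : M j j),
      act h (gmaIncl (k := k) M j j m) ∈ LinearMap.range (gmaIncl (k := k) M j j))
    (i : Fin n) (h : H) :
    act h (gmaOne M e) (i, i) = actRestrict M act i i h (e i) := by
  have hone : gmaOne M e = ∑ j, gmaIncl (k := k) M j j (e j) := rfl
  rw [hone, map_sum, Finset.sum_apply, Finset.sum_eq_single i (fun j _ hj => ?_) (by simp)]
  · rfl
  · rw [act_gmaIncl_eq_gmaIncl_actRestrict (hinv j), gmaIncl_apply_of_ne M _ (by simp [hj.symm])]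

end GMARestriction

theorem gma_restriction_diagonal_isLeftPartialAction_general
    {k : Type*} [Field k] {n : ℕ}
    (M : Fin n → Fin n → Type*) [∀ i j, AddCommGroup (M i j)] [∀ i j, Module k (M i j)]
    (θ : ∀ i j l : Fin n, M i j →ₗ[k] M j l →ₗ[k] M i l)
    (e : ∀ i, M i i)
    {H : Type*} [Ring H] [HopfAlgebra k H]
    (act : H →ₗ[k] gmaSpace M →ₗ[k] gmaSpace M)
    (hact : IsLeftPartialActionOn k (gmaMulL M θ) (gmaOne M e) act)
    (hinv : ∀ (i j : Fin n) (h : H) (m : M i j),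
      act h (gmaIncl (k := k) M i j m) ∈ LinearMap.range (gmaIncl (k := k) M i j))
    (i : Fin n) :
    IsLeftPartialActionOn k (θ i i i) (e i) (actRestrict M act i i) := by
  have hincl := act_gmaIncl_eq_gmaIncl_actRestrict (hinv i i)
  have hone := act_gmaOne_apply_diag e (fun j => hinv j j) i
  let π := LinearMap.proj (R := k) (φ := fun p : Fin n × Fin n => M p.1 p.2) (i, i)
  constructor
  · intro a
    rw [actRestrict_apply, hact.lpa1, gmaIncl_apply_same]
  · intro h a b
    rw [actRestrict_apply, ← gmaMulL_gmaIncl_gmaIncl, hact.lpa2]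
    refine LinearMap.congr_fun (comp_sweedler π fun x y => ?_) h
    simp only [π, LinearMap.flip_apply, LinearMap.proj_apply, gmaMulL_apply, hincl y b]
    exact gmaMul_gmaIncl_right_apply M θ i _ _
  · intro h g a
    rw [actRestrict_apply, ← hincl, hact.lpa3]
    refine LinearMap.congr_fun (comp_sweedler π fun x y => ?_) h
    simp [π, hincl (y * g) a, gmaMul_gmaIncl_right_apply, hone]
  · intro h g a
    rw [actRestrict_apply, ← hincl, hact.lpa3']
    refine LinearMap.congr_fun (comp_sweedler π fun x y => ?_) h
    simp [π, hincl (x * g) a, gmaMul_gmaIncl_left_apply, hone]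

/-- If a Hopf algebra `H` acts partially on the generalized matrix
algebra `R = (M i j)` leaving each embedded subbimodule `ι_ij(M i j)` invariant, then
for each `i` the restriction `h ⇀_i r = ι_ii⁻¹(h ▷ ι_ii(r))` is a symmetric left
partial action of `H` on the diagonal algebra `R_i = M i i`. -/
theorem gma_restriction_diagonal_isLeftPartialAction
    {k : Type*} [Field k] {n : ℕ}
    (M : Fin n → Fin n → Type*) [∀ i j, AddCommGroup (M i j)] [∀ i j, Module k (M i j)]
    (θ : ∀ i j l : Fin n, M i j →ₗ[k] M j l →ₗ[k] M i l)
    (e : ∀ i, M i i) (hd : IsGMDatum M θ e)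
    {H : Type*} [Ring H] [HopfAlgebra k H]
    (act : H →ₗ[k] gmaSpace M →ₗ[k] gmaSpace M)
    (hact : IsLeftPartialActionOn k (gmaMulL M θ) (gmaOne M e) act)
    (hinv : ∀ (i j : Fin n) (h : H) (m : M i j),
      act h (gmaIncl (k := k) M i j m) ∈ LinearMap.range (gmaIncl (k := k) M i j))
    (i : Fin n) :
    IsLeftPartialActionOn k (θ i i i) (e i) (actRestrict M act i i) :=
  gma_restriction_diagonal_isLeftPartialAction_general M θ e act hact hinv i
end

section
/- Let H be a Hopf algebra and R = (iMj) a generalized matrix algebra with a symmetric left partial action ▷ of H leaving each ι_ij(iMj) invariant. Then, with the induced partial action ⇀_i of H on R_i and induced left partial smash product action (r#h)·m = r·ι_ij⁻¹(h_(1) ▷ ι_ij((h_(2)·1)·m)) (i.e. via the covariant pair (ψ_ij, π_ij)), one has the multiplicativity identity (1_i#h)·(mn) = ((1_i#h_(1))·m)((1_j#h_(2))·n) for all h ∈ H, m ∈ iMj, n ∈ jMk. -/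
open TensorProduct

/-! Axiom (LPA2) applied to `ι_ij(m)` and `ι_jl(n)` gives
`h ▷ ι_il(mn) = Σ (h₍₁₎ ▷ ι_ij(m)) (h₍₂₎ ▷ ι_jl(n))`. By invariance each factor is
`ι(π(h₍ₖ₎)(·))`, a product of two such inclusions is again an inclusion, and reading off the
`(i, l)` entry gives the identity. -/

section Sweedler

variable {k H B C : Type*} [CommRing k] [Ring H] [HopfAlgebra k H]
  [AddCommGroup B] [Module k B] [AddCommGroup C] [Module k C]

theorem map_sweedler (φ : B →ₗ[k] C) (mul : B →ₗ[k] B →ₗ[k] B) (f g : H →ₗ[k] B)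
    (F : H →ₗ[k] H →ₗ[k] C) (hF : ∀ a b, φ (mul (f a) (g b)) = F a b) (h : H) :
    φ (sweedler mul f g h) = TensorProduct.lift F (Coalgebra.comul (R := k) h) := by
  have hφ : φ ∘ₗ TensorProduct.lift ((mul ∘ₗ f).compl₂ g) = TensorProduct.lift F :=
    TensorProduct.ext' fun a b => by simpa using hF a b
  exact congrArg (· (Coalgebra.comul h)) hφ

end Sweedler

section GMA

variable {k : Type*} [Field k] {n : ℕ}
variable (M : Fin n → Fin n → Type*) [∀ i j, AddCommGroup (M i j)] [∀ i j, Module k (M i j)]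
variable (θ : ∀ i j l : Fin n, M i j →ₗ[k] M j l →ₗ[k] M i l)

theorem gmaIncl_apply_self (i j : Fin n) (x : M i j) : gmaIncl (k := k) M i j x (i, j) = x := by
  simp [gmaIncl]

theorem gmaMulL_gmaIncl (i j l : Fin n) (x : M i j) (y : M j l) :
    gmaMulL M θ (gmaIncl (k := k) M i j x) (gmaIncl (k := k) M j l y) =
      gmaIncl (k := k) M i l (θ i j l x y) := by
  funext ⟨a, b⟩
  simp only [gmaMulL, LinearMap.mk₂_apply, gmaMul, gmaIncl, LinearMap.single_apply]
  rcases eq_or_ne a i with rfl | ha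
  · rw [Finset.sum_eq_single j]
    · rcases eq_or_ne b l with rfl | hb
      · simp
      · simp [Pi.single_eq_of_ne, hb]
    · intro c _ hc
      simp [Pi.single_eq_of_ne, hc]
    · simp
  · simp [Pi.single_eq_of_ne, ha]

variable {H : Type*} [Ring H] [HopfAlgebra k H]

theorem act_gmaIncl_of_mem_range (act : H →ₗ[k] gmaSpace M →ₗ[k] gmaSpace M)
    {i j : Fin n} {h : H} {m : M i j}
    (hm : act h (gmaIncl (k := k) M i j m) ∈ LinearMap.range (gmaIncl (k := k) M i j)) :
    act h (gmaIncl (k := k) M i j m) = gmaIncl (k := k) M i j (actRestrict M act i j h m) := by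
  obtain ⟨y, hy⟩ := hm
  have hπ : actRestrict M act i j h m = y := by
    simp [actRestrict, ← hy, gmaIncl_apply_self]
  rw [hπ, hy]

end GMA

theorem gma_smash_action_multiplicative_general
    {k : Type*} [Field k] {n : ℕ}
    (M : Fin n → Fin n → Type*) [∀ i j, AddCommGroup (M i j)] [∀ i j, Module k (M i j)]
    (θ : ∀ i j l : Fin n, M i j →ₗ[k] M j l →ₗ[k] M i l)
    (e : ∀ i, M i i)
    {H : Type*} [Ring H] [HopfAlgebra k H]
    (act : H →ₗ[k] gmaSpace M →ₗ[k] gmaSpace M)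
    (hact : IsLeftPartialActionOn k (gmaMulL M θ) (gmaOne M e) act)
    (hinv : ∀ (i j : Fin n) (h : H) (m : M i j),
      act h (gmaIncl (k := k) M i j m) ∈ LinearMap.range (gmaIncl (k := k) M i j))
    (i j l : Fin n) (h : H) (m : M i j) (nn : M j l) :
    actRestrict M act i l h (θ i j l m nn) =
      TensorProduct.lift
        (((θ i j l ∘ₗ ((actRestrict M act i j).flip m)).compl₂
            ((actRestrict M act j l).flip nn)))
        (Coalgebra.comul (R := k) h) := by
  calc actRestrict M act i l h (θ i j l m nn)
      = act h (gmaMulL M θ (gmaIncl M i j m) (gmaIncl M j l nn)) (i, l) := by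
        rw [gmaMulL_gmaIncl]; rfl
    _ = sweedler (gmaMulL M θ) (act.flip (gmaIncl M i j m)) (act.flip (gmaIncl M j l nn)) h
          (i, l) := by
        rw [hact.lpa2]
    _ = _ := by
        refine map_sweedler (LinearMap.proj (φ := fun p : Fin n × Fin n => M p.1 p.2) (i, l))
          _ _ _ _ (fun a b => ?_) h
        simp only [LinearMap.flip_apply, act_gmaIncl_of_mem_range M act (hinv _ _ _ _),
          gmaMulL_gmaIncl, LinearMap.proj_apply, gmaIncl_apply_self, LinearMap.compl₂_apply,
          LinearMap.comp_apply]

/-- With the notation of Theorem 3.4: for a partial action of `H` on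
the generalized matrix algebra `R = (M i j)` leaving each `ι_ij(M i j)` invariant, the
induced partial-smash-product module structures satisfy the multiplicativity identity
`(1_i#h)·(mn) = ((1_i#h₍₁₎)·m)((1_j#h₍₂₎)·n)`, i.e.
`π_il(h)(mn) = Σ π_ij(h₍₁₎)(m) · π_jl(h₍₂₎)(n)` for `m ∈ M i j`, `n ∈ M j l`
(the action of `1_i#h` via the covariant pair `(ψ_ij, π_ij)` being `ψ_ij(1_i)π_ij(h) = π_ij(h)`). -/
theorem gma_smash_action_multiplicative
    {k : Type*} [Field k] {n : ℕ}
    (M : Fin n → Fin n → Type*) [∀ i j, AddCommGroup (M i j)] [∀ i j, Module k (M i j)]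
    (θ : ∀ i j l : Fin n, M i j →ₗ[k] M j l →ₗ[k] M i l)
    (e : ∀ i, M i i) (hd : IsGMDatum M θ e)
    {H : Type*} [Ring H] [HopfAlgebra k H]
    (act : H →ₗ[k] gmaSpace M →ₗ[k] gmaSpace M)
    (hact : IsLeftPartialActionOn k (gmaMulL M θ) (gmaOne M e) act)
    (hinv : ∀ (i j : Fin n) (h : H) (m : M i j),
      act h (gmaIncl (k := k) M i j m) ∈ LinearMap.range (gmaIncl (k := k) M i j))
    (i j l : Fin n) (h : H) (m : M i j) (nn : M j l) :
    actRestrict M act i l h (θ i j l m nn) =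
      TensorProduct.lift
        (((θ i j l ∘ₗ ((actRestrict M act i j).flip m)).compl₂
            ((actRestrict M act j l).flip nn)))
        (Coalgebra.comul (R := k) h) :=
  gma_smash_action_multiplicative_general M θ e act hact hinv i j l h m nn
end
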